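/- Let R be a Noetherian ring, I an ideal generated by h₀,…,h_r, M a finitely generated R-module, and f ∈ I^s. Fix i and consider the subring R[I/h_i] of the localization R_{h_i} (the i-th affine chart of the blowup), and the module M[I/h_i] = ⊕_n I^nM·h_i^{-n} ⊆ M_{h_i}. Then h_i is a nonzerodivisor on M[I/h_i], and the quotient M[I/h_i] / h_i·M[I/h_i] is isomorphic to the localization of the associated graded module G_I(M) at the degree-one element h̄_i (degree-zero part of G_I(M)_{h̄_i}). -/

import Mathlib

set_option synthInstance.maxHeartbeats 1000000
set_option maxHeartbeats 2000000

open Polynomial PolynomialModule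

universe u

variable {R : Type u} [CommRing R] (I : Ideal R) (M : Type u) [AddCommGroup M] [Module R M]

/-- `B(M) = ⊕ₙ Iⁿ M tⁿ` as a module over the Rees algebra `B(R) = R[It]`. -/
noncomputable abbrev reesModule : Submodule (reesAlgebra I) (PolynomialModule R M) :=
  (I.stableFiltration (⊤ : Submodule R M)).submodule

/-- The ideal `I·B(R)` of the Rees algebra. -/
noncomputable abbrev reesIdeal : Ideal (reesAlgebra I) :=
  I.map (algebraMap R (reesAlgebra I))

/-- The associated graded ring `G_I(R) = B(R)/I·B(R)`. -/
noncomputable abbrev gradedRing : Type u :=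
  ↥(reesAlgebra I) ⧸ reesIdeal I

noncomputable instance : AddCommGroup ↥(reesModule I M) := inferInstance
noncomputable instance : Module ↥(reesAlgebra I) ↥(reesModule I M) := inferInstance
noncomputable instance :
    HasQuotient ↥(reesModule I M) (Submodule ↥(reesAlgebra I) ↥(reesModule I M)) :=
  Submodule.hasQuotient

/-- The associated graded module `G_I(M) = B(M)/I·B(M)`, a module over `G_I(R)`. -/
noncomputable abbrev gradedModule : Type u :=
  ↥(reesModule I M) ⧸
    (reesIdeal I • (⊤ : Submodule ↥(reesAlgebra I) ↥(reesModule I M)))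

/-- The initial form `f̄ ∈ I^s/I^{s+1} ⊆ G_I(R)` of an element `f ∈ I^s`. -/
noncomputable def initialForm {I : Ideal R} (f : R) {s : ℕ} (hf : f ∈ I ^ s) : gradedRing I :=
  Ideal.Quotient.mk _ ⟨Polynomial.monomial s f, reesAlgebra.monomial_mem.mpr hf⟩

variable {I M} in
theorem single_mem_reesModule {n : ℕ} {m : M} (hm : m ∈ I ^ n • (⊤ : Submodule R M)) :
    single R n m ∈ reesModule I M := by
  rw [Ideal.Filtration.mem_submodule]
  intro j
  rw [PolynomialModule.single_apply, Finsupp.single_apply]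
  split
  · next hj => subst hj; exact hm
  · exact Submodule.zero_mem _

/-- The chart module `M[I/h] = ⊕ₙ Iⁿ M · h⁻ⁿ ⊆ M_h` on the blow-up chart `D₊(ht)`. -/
noncomputable def chartModule (h : R) :
    Submodule R (LocalizedModule (Submonoid.powers h) M) :=
  Submodule.span R {x | ∃ (n : ℕ) (m : M), m ∈ (I ^ n • (⊤ : Submodule R M)) ∧
    x = LocalizedModule.mk m ⟨h ^ n, pow_mem (Submonoid.mem_powers h) n⟩}

/-- The image `h̄ ∈ I/I² ⊆ G_I(R)` of an element `h ∈ I`. -/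
noncomputable abbrev degOneForm (h : R) (hh : h ∈ I) : gradedRing I :=
  initialForm h (show h ∈ I ^ 1 by simpa [pow_one] using hh)

/-- The localization of the graded module `G_I(M)` at `h̄`. -/
noncomputable abbrev locGradedModule (h : R) (hh : h ∈ I) : Type u :=
  LocalizedModule (Submonoid.powers (degOneForm I h hh)) (gradedModule I M)

/-- The degree-zero part of the localization of `G_I(M)` at the degree-one element
`h̄ ∈ I/I² ⊆ G_I(R)`: the additive subgroup generated by the elements `ξ/h̄ⁿ` with
`ξ ∈ G_I(M)` homogeneous of degree `n`. -/
noncomputable def degZeroLocGraded (h : R) (hh : h ∈ I) :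
    AddSubgroup (locGradedModule I M h hh) :=
  AddSubgroup.closure {x | ∃ (n : ℕ) (m : M) (hm : m ∈ I ^ n • (⊤ : Submodule R M)),
    x = LocalizedModule.mk
      (Submodule.Quotient.mk ⟨single R n m, single_mem_reesModule hm⟩)
      ⟨(degOneForm I h hh) ^ n,
        pow_mem (Submonoid.mem_powers _) n⟩}

section Aux

variable {R : Type u} [CommRing R] {I : Ideal R} {M : Type u} [AddCommGroup M] [Module R M]
variable {h : R}

lemma pow_smul_mem (hI : h ∈ I) {n : ℕ} (k : ℕ) {m : M}
    (hm : m ∈ I ^ n • (⊤ : Submodule R M)) :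
    h ^ k • m ∈ I ^ (k + n) • (⊤ : Submodule R M) := by
  rw [pow_add, ← Ideal.smul_eq_mul, Submodule.smul_assoc]
  exact Submodule.smul_mem_smul (Ideal.pow_mem_pow hI k) hm

lemma chartModule_rep (hI : h ∈ I) {x : LocalizedModule (Submonoid.powers h) M}
    (hx : x ∈ chartModule I M h) :
    ∃ p : ℕ × M, p.2 ∈ I ^ p.1 • (⊤ : Submodule R M) ∧
      x = LocalizedModule.mk p.2 ⟨h ^ p.1, pow_mem (Submonoid.mem_powers h) p.1⟩ := by
  induction hx using Submodule.span_induction with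
  | mem x hx => obtain ⟨n, m, hm, rfl⟩ := hx; exact ⟨(n, m), hm, rfl⟩
  | zero =>
      exact ⟨(0, 0), Submodule.zero_mem _, (LocalizedModule.zero_mk _).symm⟩
  | add x y _ _ hx hy =>
      obtain ⟨⟨n1, m1⟩, hm1, rfl⟩ := hx
      obtain ⟨⟨n2, m2⟩, hm2, rfl⟩ := hy
      refine ⟨(n1 + n2, h ^ n2 • m1 + h ^ n1 • m2), ?_, ?_⟩
      · exact Submodule.add_mem _ (by simpa [Nat.add_comm n2 n1] using pow_smul_mem hI n2 hm1)
          (pow_smul_mem hI n1 hm2)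
      · rw [LocalizedModule.mk_add_mk]
        congr 1
        exact Subtype.ext (pow_add h n1 n2).symm
  | smul r x _ hx =>
      obtain ⟨⟨n, m⟩, hm, rfl⟩ := hx
      exact ⟨(n, r • m), Submodule.smul_mem _ r hm, (LocalizedModule.smul'_mk r m _)⟩

end Aux
section Aux2

variable {R : Type u} [CommRing R] {I : Ideal R} {M : Type u} [AddCommGroup M] [Module R M]
variable {h : R}

/-- The basic degree-zero fraction `[m tⁿ]/h̄ⁿ`. -/
noncomputable def Fgen (I : Ideal R) (M : Type u) [AddCommGroup M] [Module R M]
    (h : R) (hI : h ∈ I) (n : ℕ) (m : M) (hm : m ∈ I ^ n • (⊤ : Submodule R M)) :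
    locGradedModule I M h hI :=
  LocalizedModule.mk
    (Submodule.Quotient.mk ⟨single R n m, single_mem_reesModule hm⟩)
    ⟨(degOneForm I h hI) ^ n, pow_mem (Submonoid.mem_powers _) n⟩

lemma reesPow_smul (hI : h ∈ I) (k n : ℕ) (m : M) (hm : m ∈ I ^ n • (⊤ : Submodule R M)) :
    ((⟨Polynomial.monomial 1 h, reesAlgebra.monomial_mem.mpr (by simpa using hI)⟩ :
        reesAlgebra I) ^ k) •
      (⟨single R n m, single_mem_reesModule hm⟩ : reesModule I M) =
      ⟨single R (k + n) (h ^ k • m), single_mem_reesModule (pow_smul_mem hI k hm)⟩ := by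
  apply Subtype.ext
  show (((⟨Polynomial.monomial 1 h, _⟩ : reesAlgebra I) ^ k : reesAlgebra I) : R[X]) •
      (single R n m) = single R (k + n) (h ^ k • m)
  rw [SubmonoidClass.coe_pow]
  show ((Polynomial.monomial 1 h) ^ k) • (single R n m) = _
  rw [Polynomial.monomial_pow, one_mul, PolynomialModule.monomial_smul_single]

lemma degOneForm_pow_smul (hI : h ∈ I) (k n : ℕ) (m : M)
    (hm : m ∈ I ^ n • (⊤ : Submodule R M)) :
    (degOneForm I h hI) ^ k •
      (Submodule.Quotient.mk ⟨single R n m, single_mem_reesModule hm⟩ : gradedModule I M) =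
      Submodule.Quotient.mk
        ⟨single R (k + n) (h ^ k • m), single_mem_reesModule (pow_smul_mem hI k hm)⟩ := by
  rw [show (degOneForm I h hI) ^ k =
      Ideal.Quotient.mk (reesIdeal I) ((⟨Polynomial.monomial 1 h,
        reesAlgebra.monomial_mem.mpr (by simpa using hI)⟩ : reesAlgebra I) ^ k) from
    (map_pow _ _ _).symm]
  rw [Module.Quotient.mk_smul_mk, reesPow_smul hI k n m hm]

end Aux2
section Aux3

variable {R : Type u} [CommRing R] {I : Ideal R} {M : Type u} [AddCommGroup M] [Module R M]
variable {h : R}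

lemma mem_pow_smul_of_le {a b : ℕ} (hab : b ≤ a) {m : M}
    (hm : m ∈ I ^ a • (⊤ : Submodule R M)) : m ∈ I ^ b • (⊤ : Submodule R M) :=
  Submodule.smul_mono_left (Ideal.pow_le_pow_right hab) hm

lemma coeff_mem_of_mem_reesIdeal {q : ↥(reesAlgebra I)} (hq : q ∈ reesIdeal I) (a : ℕ) :
    (q : R[X]).coeff a ∈ I ^ (a + 1) := by
  rw [reesIdeal, Ideal.map, Ideal.span] at hq
  revert a
  induction hq using Submodule.span_induction with
  | mem x hx =>
      obtain ⟨r, hr, rfl⟩ := hx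
      intro a
      show (Polynomial.C r).coeff a ∈ I ^ (a + 1)
      rw [Polynomial.coeff_C]
      split
      · next ha => subst ha; simpa using hr
      · exact Ideal.zero_mem _
  | zero => intro a; simpa using Ideal.zero_mem _
  | add x y _ _ hx hy => intro a; simpa [Polynomial.coeff_add] using Ideal.add_mem _ (hx a) (hy a)
  | smul q' x _ hx =>
      intro a
      show (((q' * x : ↥(reesAlgebra I)) : R[X])).coeff a ∈ I ^ (a + 1)
      rw [MulMemClass.coe_mul, Polynomial.coeff_mul]
      refine Ideal.sum_mem _ fun c hc => ?_
      rw [Finset.HasAntidiagonal.mem_antidiagonal] at hc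
      have h1 : (q' : R[X]).coeff c.1 ∈ I ^ c.1 := q'.2 c.1
      have h2 := hx c.2
      have := Ideal.mul_mem_mul h1 h2
      rwa [← pow_add, show c.1 + (c.2 + 1) = a + 1 by omega] at this

lemma coeff_mem_of_mem_smulTop {p : ↥(reesModule I M)}
    (hp : p ∈ (reesIdeal I • ⊤ : Submodule ↥(reesAlgebra I) ↥(reesModule I M))) (j : ℕ) :
    ((p : PolynomialModule R M).coeff j) ∈ I ^ (j + 1) • (⊤ : Submodule R M) := by
  refine Submodule.smul_induction_on hp (fun r hr n _ => ?_) (fun x y hx hy => ?_)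
  · show (((r • n : ↥(reesModule I M)) : PolynomialModule R M)).coeff j ∈ _
    rw [SetLike.val_smul]
    show (((r : R[X]) • (n : PolynomialModule R M))).coeff j ∈ _
    rw [PolynomialModule.smul_apply]
    refine Submodule.sum_mem _ fun c hc => ?_
    rw [Finset.HasAntidiagonal.mem_antidiagonal] at hc
    have h1 := coeff_mem_of_mem_reesIdeal hr c.1
    have h2 : (n : PolynomialModule R M).coeff c.2 ∈ I ^ c.2 • (⊤ : Submodule R M) :=
      (Ideal.Filtration.mem_submodule _ _).mp n.2 c.2
    have := Submodule.smul_mem_smul h1 h2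
    rwa [← Submodule.smul_assoc, Ideal.smul_eq_mul, ← pow_add,
      show c.1 + 1 + c.2 = j + 1 by omega] at this
  · have : ((x + y : ↥(reesModule I M)) : PolynomialModule R M).coeff j
        = (x : PolynomialModule R M).coeff j + (y : PolynomialModule R M).coeff j := rfl
    rw [this]
    exact Submodule.add_mem _ hx hy

lemma single_smul_mem_smulTop (hI : h ∈ I) (n : ℕ) {m : M}
    (hm : m ∈ I ^ n • (⊤ : Submodule R M)) :
    (⟨single R n (h • m), single_mem_reesModule
        (mem_pow_smul_of_le (Nat.le_add_left n 1) (by simpa using pow_smul_mem hI 1 hm))⟩ :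
        ↥(reesModule I M)) ∈
      (reesIdeal I • ⊤ : Submodule ↥(reesAlgebra I) ↥(reesModule I M)) := by
  have : (⟨single R n (h • m), single_mem_reesModule
        (mem_pow_smul_of_le (Nat.le_add_left n 1) (by simpa using pow_smul_mem hI 1 hm))⟩ :
        ↥(reesModule I M)) =
      (algebraMap R ↥(reesAlgebra I) h) • ⟨single R n m, single_mem_reesModule hm⟩ := by
    apply Subtype.ext
    show single R n (h • m) = ((algebraMap R ↥(reesAlgebra I) h : ↥(reesAlgebra I)) : R[X]) •
      single R n m
    show single R n (h • m) = (Polynomial.C h) • single R n m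
    rw [← Polynomial.monomial_zero_left, PolynomialModule.monomial_smul_single, zero_add]
  rw [this]
  exact Submodule.smul_mem_smul (Ideal.mem_map_of_mem _ hI) trivial

end Aux3
section Aux4

variable {R : Type u} [CommRing R] {I : Ideal R} {M : Type u} [AddCommGroup M] [Module R M]
variable {h : R}

lemma Fgen_eq (hI : h ∈ I) {n n' : ℕ} {m m' : M}
    (hm : m ∈ I ^ n • (⊤ : Submodule R M)) (hm' : m' ∈ I ^ n' • (⊤ : Submodule R M))
    (hx : (LocalizedModule.mk m ⟨h ^ n, pow_mem (Submonoid.mem_powers h) n⟩ :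
        LocalizedModule (Submonoid.powers h) M) =
      LocalizedModule.mk m' ⟨h ^ n', pow_mem (Submonoid.mem_powers h) n'⟩) :
    Fgen I M h hI n m hm = Fgen I M h hI n' m' hm' := by
  rw [LocalizedModule.mk_eq] at hx
  obtain ⟨u, hu⟩ := hx
  obtain ⟨k, hk⟩ := u.2
  have hu' : h ^ (k + n') • m = h ^ (k + n) • m' := by
    have : (h ^ k) • ((h ^ n') • m) = (h ^ k) • ((h ^ n) • m') := by
      simpa [Submonoid.smul_def, hk] using hu
    rwa [smul_smul, smul_smul, ← pow_add, ← pow_add] at this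
  unfold Fgen
  rw [LocalizedModule.mk_eq]
  refine ⟨⟨(degOneForm I h hI) ^ k, pow_mem (Submonoid.mem_powers _) k⟩, ?_⟩
  simp only [Submonoid.mk_smul]
  rw [degOneForm_pow_smul hI n' n m hm, degOneForm_pow_smul hI k _ _ _,
    degOneForm_pow_smul hI n n' m' hm', degOneForm_pow_smul hI k _ _ _]
  apply congrArg
  apply Subtype.ext
  show single R (k + (n' + n)) (h ^ k • h ^ n' • m)
    = single R (k + (n + n')) (h ^ k • h ^ n • m')
  rw [smul_smul, smul_smul, ← pow_add, ← pow_add, hu',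
    show k + (n' + n) = k + (n + n') by omega]
  exact pow_smul_mem hI n hm'
  exact pow_smul_mem hI n' hm

lemma Fgen_add (hI : h ∈ I) (n1 n2 : ℕ) (m1 m2 : M)
    (hm1 : m1 ∈ I ^ n1 • (⊤ : Submodule R M)) (hm2 : m2 ∈ I ^ n2 • (⊤ : Submodule R M)) :
    Fgen I M h hI (n1 + n2) (h ^ n2 • m1 + h ^ n1 • m2)
      (Submodule.add_mem _ (by simpa [Nat.add_comm n2 n1] using pow_smul_mem hI n2 hm1)
        (pow_smul_mem hI n1 hm2)) =
    Fgen I M h hI n1 m1 hm1 + Fgen I M h hI n2 m2 hm2 := by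
  unfold Fgen
  rw [LocalizedModule.mk_add_mk]
  simp only [Submonoid.mk_smul]
  rw [degOneForm_pow_smul hI n2 n1 m1 hm1, degOneForm_pow_smul hI n1 n2 m2 hm2]
  have hden : (⟨(degOneForm I h hI) ^ n1, pow_mem (Submonoid.mem_powers _) n1⟩ *
      ⟨(degOneForm I h hI) ^ n2, pow_mem (Submonoid.mem_powers _) n2⟩ :
      Submonoid.powers (degOneForm I h hI)) =
      ⟨(degOneForm I h hI) ^ (n1 + n2), pow_mem (Submonoid.mem_powers _) (n1 + n2)⟩ :=
    Subtype.ext (pow_add _ n1 n2).symm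
  rw [hden]
  apply congrArg (fun z => LocalizedModule.mk z _)
  rw [← Submodule.Quotient.mk_add]
  apply congrArg
  apply Subtype.ext
  show single R (n1 + n2) (h ^ n2 • m1 + h ^ n1 • m2)
    = single R (n2 + n1) (h ^ n2 • m1) + single R (n1 + n2) (h ^ n1 • m2)
  rw [show n2 + n1 = n1 + n2 by omega, single_add]

lemma Fgen_smul (hI : h ∈ I) (c : R) (n : ℕ) (m : M)
    (hm : m ∈ I ^ n • (⊤ : Submodule R M)) :
    Fgen I M h hI n (c • m) (Submodule.smul_mem _ c hm) =
      algebraMap R (gradedRing I) c • Fgen I M h hI n m hm := by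
  unfold Fgen
  rw [LocalizedModule.smul'_mk]
  apply congrArg (fun z => LocalizedModule.mk z _)
  have halg : algebraMap R (gradedRing I) c =
      Ideal.Quotient.mk (reesIdeal I) (algebraMap R ↥(reesAlgebra I) c) :=
    rfl
  rw [halg, Module.Quotient.mk_smul_mk]
  apply congrArg
  apply Subtype.ext
  show single R n (c • m) = ((algebraMap R ↥(reesAlgebra I) c : ↥(reesAlgebra I)) : R[X]) •
    single R n m
  show single R n (c • m) = (Polynomial.C c) • single R n m
  rw [← Polynomial.monomial_zero_left, PolynomialModule.monomial_smul_single, zero_add]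

lemma Fgen_eq_zero (hI : h ∈ I) {n : ℕ} {m : M} {hm : m ∈ I ^ n • (⊤ : Submodule R M)}
    (h0 : Fgen I M h hI n m hm = 0) :
    ∃ k, h ^ k • m ∈ I ^ (k + n + 1) • (⊤ : Submodule R M) := by
  unfold Fgen at h0
  rw [show (0 : locGradedModule I M h hI) = LocalizedModule.mk 0
      ⟨(degOneForm I h hI) ^ n, pow_mem (Submonoid.mem_powers _) n⟩ from
    (LocalizedModule.zero_mk _).symm, LocalizedModule.mk_eq] at h0
  obtain ⟨⟨uv, hu2⟩, hu⟩ := h0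
  obtain ⟨k, hk⟩ := hu2
  subst hk
  rw [Submonoid.smul_def, Submonoid.smul_def, Submonoid.smul_def, Submonoid.smul_def] at hu
  simp only [smul_zero, smul_smul, ← pow_add] at hu
  refine ⟨k + n, ?_⟩
  rw [degOneForm_pow_smul hI (k + n) n m hm, Submodule.Quotient.mk_eq_zero] at hu
  have := coeff_mem_of_mem_smulTop hu (k + n + n)
  rwa [show ((⟨single R (k + n + n) (h ^ (k + n) • m),
      single_mem_reesModule (pow_smul_mem hI (k + n) hm)⟩ :
      ↥(reesModule I M)) : PolynomialModule R M).coeff (k + n + n) = h ^ (k + n) • m from by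
    simp [PolynomialModule.single_apply]] at this

end Aux4
section Aux5

variable {R : Type u} [CommRing R] {I : Ideal R} {M : Type u} [AddCommGroup M] [Module R M]
variable {h : R}

/-- The chart-to-graded map. -/
noncomputable def psi (hI : h ∈ I) (x : ↥(chartModule I M h)) : locGradedModule I M h hI :=
  Fgen I M h hI (chartModule_rep hI x.2).choose.1 (chartModule_rep hI x.2).choose.2
    (chartModule_rep hI x.2).choose_spec.1

lemma psi_spec (hI : h ∈ I) (x : ↥(chartModule I M h)) {n : ℕ} {m : M}
    (hm : m ∈ I ^ n • (⊤ : Submodule R M))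
    (hx : (x : LocalizedModule (Submonoid.powers h) M) =
      LocalizedModule.mk m ⟨h ^ n, pow_mem (Submonoid.mem_powers h) n⟩) :
    psi hI x = Fgen I M h hI n m hm :=
  Fgen_eq hI _ hm ((chartModule_rep hI x.2).choose_spec.2.symm.trans hx)

lemma psi_add (hI : h ∈ I) (x y : ↥(chartModule I M h)) :
    psi hI (x + y) = psi hI x + psi hI y := by
  obtain ⟨⟨n1, m1⟩, hm1, hx⟩ := chartModule_rep hI x.2
  obtain ⟨⟨n2, m2⟩, hm2, hy⟩ := chartModule_rep hI y.2
  rw [psi_spec hI x hm1 hx, psi_spec hI y hm2 hy, ← Fgen_add hI n1 n2 m1 m2 hm1 hm2]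
  apply psi_spec
  show (x : LocalizedModule (Submonoid.powers h) M) + (y : _) = _
  rw [hx, hy, LocalizedModule.mk_add_mk]
  congr 1
  exact Subtype.ext (pow_add h n1 n2).symm

lemma psi_smul (hI : h ∈ I) (c : R) (x : ↥(chartModule I M h)) :
    psi hI (c • x) = algebraMap R (gradedRing I) c • psi hI x := by
  obtain ⟨⟨n, m⟩, hm, hx⟩ := chartModule_rep hI x.2
  rw [psi_spec hI x hm hx, ← Fgen_smul hI c n m hm]
  apply psi_spec
  show c • (x : LocalizedModule (Submonoid.powers h) M) = _
  rw [hx, LocalizedModule.smul'_mk]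

lemma psi_mem (hI : h ∈ I) (x : ↥(chartModule I M h)) :
    psi hI x ∈ degZeroLocGraded I M h hI := by
  obtain ⟨⟨n, m⟩, hm, hx⟩ := chartModule_rep hI x.2
  rw [psi_spec hI x hm hx]
  exact AddSubgroup.subset_closure ⟨n, m, hm, rfl⟩

noncomputable def psiHom (hI : h ∈ I) :
    ↥(chartModule I M h) →+ locGradedModule I M h hI :=
  AddMonoidHom.mk' (psi hI) (psi_add hI)

lemma psi_eq_zero_iff (hI : h ∈ I) (x : ↥(chartModule I M h)) :
    psi hI x = 0 ↔ x ∈ Submodule.comap (chartModule I M h).subtype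
      (Submodule.map (LinearMap.lsmul R (LocalizedModule (Submonoid.powers h) M) h)
        (chartModule I M h)) := by
  constructor
  · intro h0
    obtain ⟨⟨n, m⟩, hm, hx⟩ := chartModule_rep hI x.2
    rw [psi_spec hI x hm hx] at h0
    obtain ⟨k, hk⟩ := Fgen_eq_zero hI h0
    rw [Submodule.mem_comap, Submodule.mem_map]
    refine ⟨LocalizedModule.mk (h ^ k • m)
      ⟨h ^ (k + n + 1), pow_mem (Submonoid.mem_powers h) (k + n + 1)⟩,
      Submodule.subset_span ⟨k + n + 1, h ^ k • m, hk, rfl⟩, ?_⟩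
    show h • LocalizedModule.mk (h ^ k • m) _ = (x : LocalizedModule (Submonoid.powers h) M)
    rw [LocalizedModule.smul'_mk, hx, LocalizedModule.mk_eq]
    refine ⟨1, ?_⟩
    rw [Submonoid.smul_def, Submonoid.smul_def, Submonoid.smul_def, Submonoid.smul_def]
    simp only [OneMemClass.coe_one, one_smul, smul_smul]
    congr 1
    ring
  · intro hx0
    rw [Submodule.mem_comap, Submodule.mem_map] at hx0
    obtain ⟨y, hy, hyx⟩ := hx0
    obtain ⟨⟨n, m⟩, hm, hyrep⟩ := chartModule_rep hI hy
    have hxrep : (x : LocalizedModule (Submonoid.powers h) M) =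
        LocalizedModule.mk (h • m) ⟨h ^ n, pow_mem (Submonoid.mem_powers h) n⟩ := by
      have hyx' : h • y = (x : LocalizedModule (Submonoid.powers h) M) := hyx
      rw [← hyx', hyrep, LocalizedModule.smul'_mk]
    rw [psi_spec hI x (mem_pow_smul_of_le (Nat.le_add_left n 1)
      (by simpa using pow_smul_mem hI 1 hm)) hxrep]
    unfold Fgen
    rw [show (Submodule.Quotient.mk ⟨single R n (h • m), single_mem_reesModule
        (mem_pow_smul_of_le (Nat.le_add_left n 1) (by simpa using pow_smul_mem hI 1 hm))⟩ :
        gradedModule I M) = 0 from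
      (Submodule.Quotient.mk_eq_zero _).mpr (single_smul_mem_smulTop hI n hm)]
    exact LocalizedModule.zero_mk _

lemma smul_cancel_of_powers (x : LocalizedModule (Submonoid.powers h) M)
    (hx0 : h • x = 0) : x = 0 := by
  induction x using LocalizedModule.induction_on with
  | _ m s =>
    rw [LocalizedModule.smul'_mk, show (0 : LocalizedModule (Submonoid.powers h) M) =
      LocalizedModule.mk 0 s from (LocalizedModule.zero_mk s).symm,
      LocalizedModule.mk_eq] at hx0
    obtain ⟨u, hu⟩ := hx0
    rw [Submonoid.smul_def, Submonoid.smul_def, Submonoid.smul_def, Submonoid.smul_def] at hu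
    simp only [smul_zero, smul_smul] at hu
    rw [show (0 : LocalizedModule (Submonoid.powers h) M) =
      LocalizedModule.mk 0 s from (LocalizedModule.zero_mk s).symm, LocalizedModule.mk_eq]
    refine ⟨⟨(u : R) * (s : R) * h, mul_mem (mul_mem u.2 s.2) (Submonoid.mem_powers h)⟩, ?_⟩
    rw [Submonoid.smul_def, Submonoid.smul_def, Submonoid.smul_def, Submonoid.smul_def]
    simp only [smul_zero, smul_smul]
    have h2 : ((s : R) * ((u : R) * ((s : R) * h))) • m = 0 := by
      rw [mul_smul, hu, smul_zero]
    convert h2 using 2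
    ring

end Aux5
section Aux6

variable {R : Type u} [CommRing R] {I : Ideal R} {M : Type u} [AddCommGroup M] [Module R M]
variable {h : R}

noncomputable abbrev chartKer (I : Ideal R) (M : Type u) [AddCommGroup M] [Module R M] (h : R) :
    Submodule R ↥(chartModule I M h) :=
  Submodule.comap (chartModule I M h).subtype
    (Submodule.map (LinearMap.lsmul R (LocalizedModule (Submonoid.powers h) M) h)
      (chartModule I M h))

noncomputable def psiBar (hI : h ∈ I) :
    (↥(chartModule I M h) ⧸ chartKer I M h) →+ ↥(degZeroLocGraded I M h hI) :=
  AddMonoidHom.mk'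
    (fun x => Quotient.liftOn' x
      (fun a => (⟨psi hI a, psi_mem hI a⟩ : ↥(degZeroLocGraded I M h hI)))
      (fun a b hab => by
        apply Subtype.ext
        show psi hI a = psi hI b
        have hab' : a - b ∈ chartKer I M h := (Submodule.quotientRel_def _).mp hab
        have h0 : psi hI (a - b) = 0 := (psi_eq_zero_iff hI _).mpr hab'
        have hsub : psi hI (a - b) = psi hI a - psi hI b := map_sub (psiHom hI) a b
        rw [hsub] at h0
        exact sub_eq_zero.mp h0))
    (fun x y => by
      obtain ⟨a, rfl⟩ := Submodule.Quotient.mk_surjective _ x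
      obtain ⟨b, rfl⟩ := Submodule.Quotient.mk_surjective _ y
      rw [← Submodule.Quotient.mk_add]
      apply Subtype.ext
      show psi hI (a + b) = psi hI a + psi hI b
      exact psi_add hI a b)

lemma psiBar_mk (hI : h ∈ I) (a : ↥(chartModule I M h)) :
    psiBar hI (Submodule.Quotient.mk a) = ⟨psi hI a, psi_mem hI a⟩ := rfl

lemma psiBar_bijective (hI : h ∈ I) : Function.Bijective (psiBar (M := M) hI) := by
  constructor
  · rw [injective_iff_map_eq_zero]
    intro q hq
    obtain ⟨a, rfl⟩ := Submodule.Quotient.mk_surjective _ q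
    rw [psiBar_mk] at hq
    have h0 : psi hI a = 0 := congrArg Subtype.val hq
    rw [Submodule.Quotient.mk_eq_zero]
    exact (psi_eq_zero_iff hI a).mp h0
  · intro b
    have hb := b.2
    have hex : ∃ a : ↥(chartModule I M h), psi hI a = (b : locGradedModule I M h hI) := by
      refine AddSubgroup.closure_induction ?_ ?_ ?_ ?_ hb
      · rintro x ⟨n, m, hm, rfl⟩
        refine ⟨⟨LocalizedModule.mk m ⟨h ^ n, pow_mem (Submonoid.mem_powers h) n⟩,
          Submodule.subset_span ⟨n, m, hm, rfl⟩⟩, ?_⟩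
        exact psi_spec hI _ hm rfl
      · exact ⟨0, map_zero (psiHom hI)⟩
      · rintro x y - - ⟨a, ha⟩ ⟨c, hc⟩
        exact ⟨a + c, by rw [psi_add hI, ha, hc]⟩
      · rintro x - ⟨a, ha⟩
        exact ⟨-a, by rw [show psi hI (-a) = -psi hI a from map_neg (psiHom hI) a, ha]⟩
    obtain ⟨a, ha⟩ := hex
    exact ⟨Submodule.Quotient.mk a, Subtype.ext ha⟩

end Aux6


/-- On the chart `D₊(h_i t)` of the blow-up of `I`, with `I = (h₀, …, h_r)`:
`h_i` is a nonzerodivisor on `M[I/h_i]`, and `M[I/h_i] / h_i·M[I/h_i]` is isomorphic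
(compatibly with the `R`-actions) to the degree-zero part of the localization of the
associated graded module `G_I(M)` at the class `h̄ᵢ ∈ I/I²`. -/
theorem stmt_16 {R M : Type u} [CommRing R] [IsNoetherianRing R] [AddCommGroup M] [Module R M]
    [Module.Finite R M] (I : Ideal R) (r : ℕ) (hs : Fin (r + 1) → R)
    (hgen : Ideal.span (Set.range hs) = I) (i : Fin (r + 1)) :
    (∀ x ∈ chartModule I M (hs i), hs i • x = 0 → x = 0) ∧
    ∃ e : (↥(chartModule I M (hs i)) ⧸
          Submodule.comap (chartModule I M (hs i)).subtype
            (Submodule.map (LinearMap.lsmul R (LocalizedModule (Submonoid.powers (hs i)) M) (hs i))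
              (chartModule I M (hs i)))) ≃+
        ↥(degZeroLocGraded I M (hs i) (hgen ▸ Ideal.subset_span ⟨i, rfl⟩)),
      ∀ (c : R) (x : ↥(chartModule I M (hs i)) ⧸
          Submodule.comap (chartModule I M (hs i)).subtype
            (Submodule.map (LinearMap.lsmul R (LocalizedModule (Submonoid.powers (hs i)) M) (hs i))
              (chartModule I M (hs i)))),
        (e (c • x) : locGradedModule I M (hs i) (hgen ▸ Ideal.subset_span ⟨i, rfl⟩)) =
          algebraMap R (gradedRing I) c •
            (e x : locGradedModule I M (hs i) (hgen ▸ Ideal.subset_span ⟨i, rfl⟩)) := by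
  have hI : hs i ∈ I := hgen ▸ Ideal.subset_span ⟨i, rfl⟩
  constructor
  · exact fun x _ hx0 => smul_cancel_of_powers x hx0
  · refine ⟨AddEquiv.ofBijective (psiBar hI) (psiBar_bijective hI), ?_⟩
    intro c x
    obtain ⟨a, rfl⟩ := Submodule.Quotient.mk_surjective _ x
    show ((psiBar hI (c • Submodule.Quotient.mk a) : ↥(degZeroLocGraded I M (hs i) hI)) :
        locGradedModule I M (hs i) hI) =
      algebraMap R (gradedRing I) c •
        ((psiBar hI (Submodule.Quotient.mk a) : ↥(degZeroLocGraded I M (hs i) hI)) :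
          locGradedModule I M (hs i) hI)
    rw [← Submodule.Quotient.mk_smul, psiBar_mk, psiBar_mk]
    exact psi_smul hI c a
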